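/- Suppose g : ZMod M × ZMod N → ℂ satisfies Ĝ(u,v) = F̂(u,v) · Ĥ(u,v) for every (u,v), where F̂, Ĥ, Ĝ are the two-dimensional DFTs of f, h_e, g respectively. Then for all (m,n), g(m,n) = Σ_{i=0}^{J−1} Σ_{j=0}^{K−1} h(J−1−i, K−1−j) · f(m − (J−1) + i, n − (K−1) + j) (indices modulo M and N respectively); that is, the spatial-domain operation corresponding to the frequency-domain product uses the coordinate-reversed PSF h'(i,j) = h(J−1−i, K−1−j), with the corner element h'(J−1,K−1) rather than the symmetric center aligned with the processed pixel. -/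

import Mathlib

noncomputable def dft2 {M N : ℕ} [NeZero M] [NeZero N]
    (z : ZMod M × ZMod N → ℂ) (u : ZMod M) (v : ZMod N) : ℂ :=
  ∑ m : ZMod M, ∑ n : ZMod N,
    z (m, n) * Complex.exp (-2 * Real.pi * Complex.I * (u.val : ℂ) * (m.val : ℂ) / (M : ℂ))
      * Complex.exp (-2 * Real.pi * Complex.I * (v.val : ℂ) * (n.val : ℂ) / (N : ℂ))

/-! The 2D DFT is the Fourier transform of the finite abelian group `ZMod M × ZMod N`
(iterated `ZMod.dft`), so it is injective and turns circular convolution into pointwise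
multiplication. Hence `g = he ⋆ f`, i.e. `g(m,n) = Σ_{i<J, j<K} h(i,j) f(m-i, n-j)` because `he`
vanishes outside the `J × K` corner (this needs `J ≤ M`, `K ≤ N` to avoid wrap-around);
substituting `i ↦ J-1-i`, `j ↦ K-1-j` gives the reversed PSF. -/

open Finset Complex ZMod

section CircConv

variable {G R : Type*} [AddCommGroup G] [Fintype G] [CommSemiring R]

def circConv (a b : G → R) (p : G) : R := ∑ q, a q * b (p - q)

lemma AddChar.sum_mul_circConv (ψ : AddChar G R) (a b : G → R) :
    ∑ p, ψ p * circConv a b p = (∑ p, ψ p * a p) * ∑ p, ψ p * b p := by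
  rw [sum_mul_sum]
  simp only [circConv, mul_sum]
  rw [sum_comm]
  refine sum_congr rfl fun q _ => (Fintype.sum_equiv (Equiv.addLeft q) _ _ fun r => ?_).symm
  simp only [Equiv.coe_addLeft, add_sub_cancel_left, AddChar.map_add_eq_mul]
  ring

end CircConv

lemma Fin.natCast_val_rev {R : Type*} [AddGroupWithOne R] {J : ℕ} (i : Fin J) :
    ((i.rev : ℕ) : R) = ((J - 1 : ℕ) : R) - (i : ℕ) := by
  have : (i.rev : ℕ) + i = J - 1 := by rw [Fin.val_rev]; omega
  exact eq_sub_of_add_eq (by rw [← Nat.cast_add, this])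

namespace ZMod

variable {M N : ℕ} [NeZero M] [NeZero N]

lemma exp_neg_two_pi_I_val_mul_val_div (u m : ZMod M) :
    exp (-2 * Real.pi * I * (u.val : ℂ) * (m.val : ℂ) / (M : ℂ)) = stdAddChar (-(m * u)) := by
  have : -(m * u) = Int.cast (-(m.val * u.val : ℤ)) := by push_cast; simp
  rw [this, stdAddChar_coe]
  push_cast
  ring_nf

lemma sum_eq_sum_fin_of_le_val {R : Type*} [AddCommMonoid R] {J : ℕ} (hJ : J ≤ M)
    (φ : ZMod M → R) (hφ : ∀ a, J ≤ a.val → φ a = 0) :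
    ∑ a, φ a = ∑ i : Fin J, φ (i : ℕ) := by
  have val_cast (i : Fin J) : ((i : ℕ) : ZMod M).val = i := val_cast_of_lt (i.2.trans_le hJ)
  refine (sum_of_injOn (fun i : Fin J => ((i : ℕ) : ZMod M)) ?_ (by simp) ?_ (by simp)).symm
  · intro i _ i' _ hii'
    exact Fin.ext (by simpa only [val_cast] using congrArg ZMod.val hii')
  · intro a _ ha
    exact hφ a (not_lt.1 fun haJ => ha ⟨⟨a.val, haJ⟩, by simp, natCast_zmod_val a⟩)

lemma circConv_apply_of_support {R : Type*} [CommSemiring R] {J K : ℕ} (hJ : J ≤ M)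
    (hK : K ≤ N) (a b : ZMod M × ZMod N → R)
    (ha : ∀ m n, J ≤ m.val ∨ K ≤ n.val → a (m, n) = 0) (m : ZMod M) (n : ZMod N) :
    circConv a b (m, n) = ∑ i : Fin J, ∑ j : Fin K, a (i, j) * b (m - i, n - j) := by
  rw [circConv, Fintype.sum_prod_type, sum_eq_sum_fin_of_le_val hJ _ fun p hp => sum_eq_zero fun q _ => by
    rw [ha p q (.inl hp), zero_mul]]
  refine sum_congr rfl fun i _ => sum_eq_sum_fin_of_le_val hK _ fun q hq => ?_
  rw [ha _ q (.inr hq), zero_mul]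

noncomputable def dftChar2 (u : ZMod M) (v : ZMod N) : AddChar (ZMod M × ZMod N) ℂ :=
  (stdAddChar.mulShift (-u)).compAddMonoidHom (AddMonoidHom.fst _ _) *
    (stdAddChar.mulShift (-v)).compAddMonoidHom (AddMonoidHom.snd _ _)

lemma dft2_eq_sum_dftChar2 (z : ZMod M × ZMod N → ℂ) (u : ZMod M) (v : ZMod N) :
    dft2 z u v = ∑ p, dftChar2 u v p * z p := by
  rw [dft2, Fintype.sum_prod_type]
  refine sum_congr rfl fun m _ => sum_congr rfl fun n _ => ?_
  rw [exp_neg_two_pi_I_val_mul_val_div, exp_neg_two_pi_I_val_mul_val_div]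
  simp only [dftChar2, AddChar.mul_apply, AddChar.compAddMonoidHom_apply, AddChar.mulShift_apply,
    AddMonoidHom.coe_fst, AddMonoidHom.coe_snd, neg_mul, mul_comm u m, mul_comm v n]
  ring

lemma dft2_eq_dft_dft (z : ZMod M × ZMod N → ℂ) (u : ZMod M) (v : ZMod N) :
    dft2 z u v = 𝓕 (fun m => 𝓕 (fun n => z (m, n))) u v := by
  simp only [dft2, dft_apply, Finset.sum_apply, Pi.smul_apply, smul_eq_mul, mul_sum,
    exp_neg_two_pi_I_val_mul_val_div]
  refine sum_congr rfl fun m _ => sum_congr rfl fun n _ => ?_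
  ring

lemma dft2_injective {z w : ZMod M × ZMod N → ℂ} (h : ∀ u v, dft2 z u v = dft2 w u v) :
    z = w := by
  have outer : 𝓕 (fun m => 𝓕 (fun n => z (m, n))) = 𝓕 (fun m => 𝓕 (fun n => w (m, n))) := by
    ext u v
    simp only [← dft2_eq_dft_dft, h]
  ext ⟨m, n⟩
  exact congrFun (dft.injective (congrFun (dft.injective outer) m)) n

lemma dft2_circConv (a b : ZMod M × ZMod N → ℂ) (u : ZMod M) (v : ZMod N) :
    dft2 (circConv a b) u v = dft2 a u v * dft2 b u v := by
  simp only [dft2_eq_sum_dftChar2]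
  exact AddChar.sum_mul_circConv _ a b

end ZMod

/-- If `Ĝ(u,v) = F̂(u,v)·Ĥ(u,v)` for all `(u,v)`, then the spatial-domain
operation uses the coordinate-reversed PSF `h'(i,j) = h(J−1−i, K−1−j)`, with the corner
element (not the symmetric center) aligned with the processed pixel. -/
theorem frequency_product_2d_gives_reversed_psf
    (M N J K : ℕ) [NeZero M] [NeZero N]
    (hJodd : Odd J) (hKodd : Odd K) (hJM : J < M) (hKN : K < N)
    (f : ZMod M × ZMod N → ℂ) (h : Fin J × Fin K → ℂ)
    (he : ZMod M × ZMod N → ℂ)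
    (hhe : ∀ (m : ZMod M) (n : ZMod N),
      he (m, n) = if hmn : m.val < J ∧ n.val < K
        then h (⟨m.val, hmn.1⟩, ⟨n.val, hmn.2⟩) else 0)
    (g : ZMod M × ZMod N → ℂ)
    (hfreq : ∀ (u : ZMod M) (v : ZMod N), dft2 g u v = dft2 f u v * dft2 he u v) :
    ∀ (m : ZMod M) (n : ZMod N),
      g (m, n) = ∑ i : Fin J, ∑ j : Fin K,
        h (⟨J - 1 - i.val, by rcases hJodd with ⟨c, hc⟩; have := i.isLt; omega⟩,
           ⟨K - 1 - j.val, by rcases hKodd with ⟨c, hc⟩; have := j.isLt; omega⟩) *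
          f (m - ((J - 1 : ℕ) : ZMod M) + ((i.val : ℕ) : ZMod M),
             n - ((K - 1 : ℕ) : ZMod N) + ((j.val : ℕ) : ZMod N)) := by
  have hg : g = circConv he f := dft2_injective fun u v => by
    rw [hfreq, dft2_circConv, mul_comm]
  have he_outside : ∀ m n, J ≤ m.val ∨ K ≤ n.val → he (m, n) = 0 := fun m n hmn => by
    rw [hhe, dif_neg (by omega)]
  have he_inside (i : Fin J) (j : Fin K) : he ((i : ℕ), (j : ℕ)) = h (i, j) := by
    have hi : ((i : ℕ) : ZMod M).val = i := val_cast_of_lt (i.2.trans hJM)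
    have hj : ((j : ℕ) : ZMod N).val = j := val_cast_of_lt (j.2.trans hKN)
    rw [hhe, dif_pos (by omega)]
    congr
  intro m n
  rw [hg, circConv_apply_of_support hJM.le hKN.le he f he_outside]
  refine (Fintype.sum_equiv Fin.revPerm _ _ fun i =>
    Fintype.sum_equiv Fin.revPerm _ _ fun j => ?_).symm
  rw [Fin.revPerm_apply, Fin.revPerm_apply, he_inside, Fin.natCast_val_rev i,
    Fin.natCast_val_rev j]
  congr 1
  · congr 1
    ext <;> simp only [Fin.val_rev] <;> omega
  · simp only [sub_add]
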